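/- arXiv:1409.6949 — 4 statements merged into one kernel-verified Lean document; each statement's English description precedes it below -/
import Mathlib

section
/- Every finite simple graph G with at least one vertex admits a feasible schedule for boat capacity β(G) + 1. -/
open Finset

/-- `C` is a vertex cover of `G`: every edge has an endpoint in `C`. -/
def IsCover {V : Type*} (G : SimpleGraph V) (C : Finset V) : Prop :=
  ∀ ⦃u v : V⦄, G.Adj u v → u ∈ C ∨ v ∈ C

/-- `A` is an independent set of `G`: no two of its vertices are adjacent. -/
def IsIndep {V : Type*} (G : SimpleGraph V) (A : Finset V) : Prop :=
  ∀ ⦃u : V⦄, u ∈ A → ∀ ⦃v : V⦄, v ∈ A → ¬ G.Adj u v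

/-- The vertex cover number β(G): the minimum size of a vertex cover of `G`. -/
noncomputable def coverNumber {V : Type*} [Fintype V] (G : SimpleGraph V) : ℕ :=
  sInf {n : ℕ | ∃ C : Finset V, IsCover G C ∧ C.card = n}

/-- `G` admits a feasible schedule for a boat of capacity `b`, in the sense of the
structure theorem of Csorba, Hurkens and Woeginger. -/
def Feasible {V : Type*} [Fintype V] [DecidableEq V] (G : SimpleGraph V) (b : ℕ) : Prop :=
  ∃ X₁ X₂ X₃ Y₁ Y₂ : Finset V,
    Disjoint X₁ X₂ ∧ Disjoint X₁ X₃ ∧ Disjoint X₂ X₃ ∧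
    IsIndep G (X₁ ∪ X₂ ∪ X₃) ∧
    Y₁.Nonempty ∧ Y₂.Nonempty ∧
    Y₁ ⊆ Finset.univ \ (X₁ ∪ X₂ ∪ X₃) ∧ Y₂ ⊆ Finset.univ \ (X₁ ∪ X₂ ∪ X₃) ∧
    (Finset.univ \ (X₁ ∪ X₂ ∪ X₃)).card ≤ b ∧
    IsIndep G (X₁ ∪ Y₁) ∧ IsIndep G (X₂ ∪ Y₂) ∧
    X₃.card ≤ Y₁.card + Y₂.card

/-- `G` is of class one if it has a feasible schedule for boat capacity β(G). -/
def ClassOne {V : Type*} [Fintype V] [DecidableEq V] (G : SimpleGraph V) : Prop :=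
  Feasible G (coverNumber G)

/-- `G` is of class two if it is not of class one. -/
def ClassTwo {V : Type*} [Fintype V] [DecidableEq V] (G : SimpleGraph V) : Prop :=
  ¬ ClassOne G

/-!
Take a minimum vertex cover `C`; its complement is independent. Leave one vertex `v` of the
complement on the boat as both `Y₁` and `Y₂` and put the rest of the complement into `X₁`:
then `Y = C ∪ {v}` has `β(G) + 1` vertices and `X₁ ∪ Y₁` is the whole complement. When `C`
is everything, a single vertex plays the role of the complement.
-/

section

variable {V : Type*} {G : SimpleGraph V}

theorem IsIndep.mono {A B : Finset V} (hB : IsIndep G B) (hAB : A ⊆ B) : IsIndep G A :=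
  fun _ hu _ hv => hB (hAB hu) (hAB hv)

theorem isIndep_singleton (v : V) : IsIndep G {v} := by
  intro u hu w hw
  rw [mem_singleton] at hu hw
  subst hu hw
  exact G.irrefl

section Fintype

variable [Fintype V]

theorem exists_isCover_card_eq_coverNumber (G : SimpleGraph V) :
    ∃ C : Finset V, IsCover G C ∧ C.card = coverNumber G :=
  Nat.sInf_mem (s := {n | ∃ C : Finset V, IsCover G C ∧ C.card = n})
    ⟨univ.card, univ, fun u _ _ => Or.inl (mem_univ u), rfl⟩

variable [DecidableEq V]

theorem IsCover.isIndep_compl {C : Finset V} (hC : IsCover G C) : IsIndep G Cᶜ := by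
  intro u hu v hv huv
  rw [mem_compl] at hu hv
  exact (hC huv).elim hu hv

theorem exists_isIndep_mem_card_compl_le [Nonempty V] {C : Finset V} (hC : IsCover G C) :
    ∃ A : Finset V, ∃ v ∈ A, IsIndep G A ∧ Aᶜ.card ≤ C.card := by
  by_cases hne : (Cᶜ).Nonempty
  · obtain ⟨v, hv⟩ := hne
    exact ⟨Cᶜ, v, hv, hC.isIndep_compl, by rw [compl_compl]⟩
  · obtain ⟨v⟩ := ‹Nonempty V›
    rw [not_nonempty_iff_eq_empty, compl_eq_empty_iff] at hne
    exact ⟨{v}, v, mem_singleton_self v, isIndep_singleton v,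
      hne ▸ card_le_card (subset_univ _)⟩

theorem Feasible.mono {b b' : ℕ} (h : Feasible G b) (hb : b ≤ b') : Feasible G b' := by
  obtain ⟨X₁, X₂, X₃, Y₁, Y₂, h₁₂, h₁₃, h₂₃, hX, hY₁, hY₂, hY₁X, hY₂X, hcard, h₁, h₂, h₃⟩ := h
  exact ⟨X₁, X₂, X₃, Y₁, Y₂, h₁₂, h₁₃, h₂₃, hX, hY₁, hY₂, hY₁X, hY₂X, hcard.trans hb, h₁, h₂, h₃⟩

theorem feasible_of_isIndep_of_mem {A : Finset V} {v : V} (hA : IsIndep G A) (hv : v ∈ A) :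
    Feasible G (Aᶜ.card + 1) := by
  have hY : univ \ (A.erase v ∪ ∅ ∪ ∅) = insert v Aᶜ := by
    ext x
    by_cases hx : x = v <;> simp [hx, hv]
  have hvY : {v} ⊆ univ \ (A.erase v ∪ ∅ ∪ ∅) := by
    rw [hY, singleton_subset_iff]
    exact mem_insert_self v _
  refine ⟨A.erase v, ∅, ∅, {v}, {v}, disjoint_empty_right _, disjoint_empty_right _,
    disjoint_empty_left _, ?_, singleton_nonempty v, singleton_nonempty v, hvY, hvY, ?_, ?_,
    ?_, by simp⟩
  · simpa only [union_empty] using hA.mono (erase_subset v A)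
  · rw [hY]
    exact card_insert_le v _
  · rwa [union_comm, ← insert_eq, insert_erase hv]
  · simpa only [empty_union] using isIndep_singleton v

end Fintype

end

/-- Every finite simple graph with at least one vertex admits a feasible schedule
for boat capacity β(G) + 1. -/
theorem feasible_coverNumber_succ {V : Type*} [Fintype V] [DecidableEq V] [Nonempty V]
    (G : SimpleGraph V) : Feasible G (coverNumber G + 1) := by
  obtain ⟨C, hC, hCcard⟩ := exists_isCover_card_eq_coverNumber G
  obtain ⟨A, v, hv, hA, hAC⟩ := exists_isIndep_mem_card_compl_le hC
  exact (feasible_of_isIndep_of_mem hA hv).mono (by omega)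
end

section
/- If a finite simple graph G has two distinct minimum vertex covers (equivalently, two distinct maximum independent sets), then G is of class one. -/
open Finset

/-!
Let `C ≠ D` be covers with `|D| ≤ |C|`, so `C \ D` is nonempty and `|D \ C| ≤ |C \ D|`.
Take `X = V \ C` (independent, `Y = C` fits in a boat of size `|C|`), split as
`X₁ = V \ (C ∪ D)`, `X₂ = ∅`, `X₃ = D \ C`, and let `Y₁ = Y₂ = C \ D`.
Both `X₁ ∪ Y₁` and `X₂ ∪ Y₂` avoid the cover `D`, hence are independent, and
`|X₃| = |D \ C| ≤ |C \ D| ≤ |Y₁| + |Y₂|`.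
-/

section

variable {V : Type*} {G : SimpleGraph V}

theorem IsCover.isIndep_of_disjoint {C A : Finset V} (hC : IsCover G C) (hA : Disjoint A C) :
    IsIndep G A := fun _ hu _ hv hadj =>
  (hC hadj).elim (disjoint_left.mp hA hu) (disjoint_left.mp hA hv)

variable [Fintype V] [DecidableEq V]

theorem feasible_card_of_isCover_of_card_le {C D : Finset V} (hC : IsCover G C)
    (hD : IsCover G D) (hle : D.card ≤ C.card) (hne : C ≠ D) : Feasible G C.card := by
  have hCD : (C \ D).Nonempty :=
    sdiff_nonempty.mpr fun hsub => hne (eq_of_subset_of_card_le hsub hle)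
  have hX : univ \ (C ∪ D) ∪ ∅ ∪ (D \ C) = univ \ C := by
    ext x; simp only [mem_union, mem_sdiff, mem_univ, notMem_empty, true_and]; tauto
  have hY : univ \ (univ \ (C ∪ D) ∪ ∅ ∪ (D \ C)) = C := by
    rw [hX, sdiff_sdiff_right_self, inf_eq_inter, univ_inter]
  refine ⟨univ \ (C ∪ D), ∅, D \ C, C \ D, C \ D, disjoint_empty_right _, ?_,
    disjoint_empty_left _, ?_, hCD, hCD,
    hY.symm ▸ sdiff_subset, hY.symm ▸ sdiff_subset, (congrArg card hY).le, ?_, ?_, ?_⟩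
  · exact disjoint_left.mpr fun _ hx hx' => by simp_all
  · rw [hX]; exact hC.isIndep_of_disjoint sdiff_disjoint
  · exact hD.isIndep_of_disjoint (disjoint_left.mpr fun _ hx hx' => by simp_all)
  · rw [empty_union]; exact hD.isIndep_of_disjoint sdiff_disjoint
  · exact le_add_right (card_sdiff_le_card_sdiff_iff.mpr hle)

end

/-- If a graph has two distinct minimum vertex covers, then it is of class one. -/
theorem classOne_of_two_min_covers {V : Type*} [Fintype V] [DecidableEq V]
    (G : SimpleGraph V) (C D : Finset V)
    (hC : IsCover G C) (hD : IsCover G D)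
    (hCcard : C.card = coverNumber G) (hDcard : D.card = coverNumber G)
    (hne : C ≠ D) : ClassOne G := by
  have h := feasible_card_of_isCover_of_card_le hC hD (hDcard.trans hCcard.symm).le hne
  rwa [hCcard] at h
end

section
/- Let G be a finite simple graph and let C be a minimum vertex cover of G. Then C is the unique minimum vertex cover of G if and only if for every nonempty independent set A ⊆ C one has |N_{V−C}(A)| > |A|. -/
/-!
If `A ⊆ C` is independent with `|N_{V−C}(A)| ≤ |A|`, trading `A` for `N_{V−C}(A)` yields a
vertex cover no larger than `C` that misses `A`, hence a second minimum cover. Conversely, if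
`D ≠ C` is another minimum cover, then `A = C \ D` is a nonempty independent set whose
neighbours outside `C` all lie in `D \ C`, and `|D \ C| = |C \ D| = |A|`.
-/

open Finset

/-- `extNbr G C S` is N_{V−C}(S): the set of vertices outside `C` that are adjacent to
at least one vertex of `S`. -/
def extNbr {V : Type*} [Fintype V] [DecidableEq V] (G : SimpleGraph V) [DecidableRel G.Adj]
    (C S : Finset V) : Finset V :=
  Finset.univ.filter (fun v => v ∉ C ∧ ∃ s ∈ S, G.Adj s v)

section

variable {V : Type*} {G : SimpleGraph V}

theorem IsCover.coverNumber_le_card [Fintype V] {D : Finset V} (hD : IsCover G D) :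
    coverNumber G ≤ D.card :=
  Nat.sInf_le ⟨D, hD, rfl⟩

theorem IsCover.isIndep_sdiff [DecidableEq V] {D : Finset V} (hD : IsCover G D) (C : Finset V) :
    IsIndep G (C \ D) :=
  fun _ hu _ hv hadj => (hD hadj).elim (mem_sdiff.1 hu).2 (mem_sdiff.1 hv).2

variable [Fintype V] [DecidableEq V] [DecidableRel G.Adj]

theorem mem_extNbr {C S : Finset V} {v : V} :
    v ∈ extNbr G C S ↔ v ∉ C ∧ ∃ s ∈ S, G.Adj s v := by
  simp [extNbr]

namespace IsCover

theorem sdiff_union_extNbr {C A : Finset V} (hC : IsCover G C) (hA : IsIndep G A) :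
    IsCover G ((C \ A) ∪ extNbr G C A) := by
  have covered : ∀ ⦃u v⦄, G.Adj u v → u ∈ C →
      u ∈ (C \ A) ∪ extNbr G C A ∨ v ∈ (C \ A) ∪ extNbr G C A := by
    intro u v hadj hu
    by_cases huA : u ∈ A
    · right
      by_cases hvC : v ∈ C
      · exact mem_union_left _ (mem_sdiff.2 ⟨hvC, fun hvA => hA huA hvA hadj⟩)
      · exact mem_union_right _ (mem_extNbr.2 ⟨hvC, u, huA, hadj⟩)
    · exact Or.inl (mem_union_left _ (mem_sdiff.2 ⟨hu, huA⟩))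
  intro u v hadj
  rcases hC hadj with hu | hv
  · exact covered hadj hu
  · exact (covered hadj.symm hv).symm

theorem extNbr_sdiff_subset {D : Finset V} (hD : IsCover G D) (C : Finset V) :
    extNbr G C (C \ D) ⊆ D \ C := by
  intro v hv
  obtain ⟨hvC, s, hs, hadj⟩ := mem_extNbr.1 hv
  exact mem_sdiff.2 ⟨(hD hadj).resolve_left (mem_sdiff.1 hs).2, hvC⟩

theorem card_extNbr_sdiff_le {C D : Finset V} (hD : IsCover G D) (hDC : D.card ≤ C.card) :
    (extNbr G C (C \ D)).card ≤ (C \ D).card := by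
  have hsub := card_le_card (hD.extNbr_sdiff_subset C)
  have hD' := card_sdiff_add_card_inter D C
  have hC' := card_sdiff_add_card_inter C D
  rw [inter_comm] at hD'
  omega

end IsCover

theorem card_sdiff_union_extNbr_le {C A : Finset V} (hAC : A ⊆ C)
    (hle : (extNbr G C A).card ≤ A.card) : ((C \ A) ∪ extNbr G C A).card ≤ C.card :=
  calc ((C \ A) ∪ extNbr G C A).card ≤ (C \ A).card + (extNbr G C A).card := card_union_le _ _
    _ ≤ (C \ A).card + A.card := by omega
    _ = C.card := card_sdiff_add_card_eq_card hAC

theorem notMem_sdiff_union_extNbr {C A : Finset V} {a : V} (hAC : A ⊆ C) (ha : a ∈ A) :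
    a ∉ (C \ A) ∪ extNbr G C A := by
  simp only [mem_union, mem_sdiff, mem_extNbr, ha, hAC ha]
  tauto

end

/-- `C` is the unique minimum vertex cover of `G` iff every nonempty independent
set `A ⊆ C` satisfies `|N_{V−C}(A)| > |A|`. -/
theorem unique_min_cover_iff {V : Type*} [Fintype V] [DecidableEq V]
    (G : SimpleGraph V) [DecidableRel G.Adj] (C : Finset V)
    (hC : IsCover G C) (hmin : C.card = coverNumber G) :
    (∀ D : Finset V, IsCover G D → D.card = coverNumber G → D = C) ↔
      (∀ A ⊆ C, A.Nonempty → IsIndep G A → A.card < (extNbr G C A).card) := by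
  constructor
  · intro huniq A hAC ⟨a, ha⟩ hA
    by_contra! hle
    have hcover := hC.sdiff_union_extNbr hA
    have hcard := card_sdiff_union_extNbr_le hAC hle
    have hswap := huniq _ hcover (by have := hcover.coverNumber_le_card; omega)
    exact notMem_sdiff_union_extNbr hAC ha (hswap ▸ hAC ha)
  · intro hexpand D hD hDcard
    have hle := hD.card_extNbr_sdiff_le (C := C) (by omega)
    have hCD : C ⊆ D := by
      by_contra hCD
      have hne : (C \ D).Nonempty := sdiff_nonempty.2 hCD
      exact absurd (hexpand _ sdiff_subset hne (hD.isIndep_sdiff C)) (not_lt.2 hle)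
    exact (eq_of_subset_of_card_le hCD (by omega)).symm
end

section
/- For every n ≥ 1, the n-dimensional hypercube graph Q_n is of class one. -/
/-! The hypercube is bipartite (by coordinate parity) and flipping one coordinate is a perfect
matching between the two sides. A perfect matching forces every vertex cover to contain at
least half of the vertices, so the odd side `O` already fits in a boat of capacity β(Q_n).
Taking `X₃` to be the even side and `Y₁ = Y₂ = O` is then a feasible schedule, since the two
sides have the same size. -/

open Finset

/-- The `n`-dimensional hypercube graph: vertices are functions `Fin n → Bool`, adjacent
iff they differ in exactly one coordinate. -/
def hypercubeGraph (n : ℕ) : SimpleGraph (Fin n → Bool) where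
  Adj x y := (Finset.univ.filter fun i => x i ≠ y i).card = 1
  symm := by
    constructor
    intro x y h
    have : (Finset.univ.filter fun i => y i ≠ x i) = (Finset.univ.filter fun i => x i ≠ y i) := by
      apply Finset.filter_congr
      intro i _
      simp [ne_comm]
    rw [this]
    exact h
  loopless := by
    constructor
    intro x h
    simp at h

open Function

section Bipartite

variable {V : Type*} [Fintype V] {G : SimpleGraph V}

lemma le_coverNumber {k : ℕ} (h : ∀ C : Finset V, IsCover G C → k ≤ #C) :
    k ≤ coverNumber G :=
  le_csInf ⟨_, univ, fun u _ _ => Or.inl (mem_univ u), rfl⟩ <| by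
    rintro _ ⟨C, hC, rfl⟩
    exact h C hC

variable [DecidableEq V] {f : V → V}

lemma card_le_two_mul_card_of_isCover (hf : Involutive f) (hadj : ∀ x, G.Adj x (f x))
    {C : Finset V} (hC : IsCover G C) : Fintype.card V ≤ 2 * #C := by
  have hcov : univ ⊆ C ∪ C.image f := fun x _ => by
    rcases hC (hadj x) with hx | hfx
    · exact mem_union_left _ hx
    · exact mem_union_right _ (mem_image.2 ⟨f x, hfx, hf x⟩)
  calc Fintype.card V = #(univ : Finset V) := card_univ.symm
    _ ≤ #(C ∪ C.image f) := card_le_card hcov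
    _ ≤ #C + #(C.image f) := card_union_le _ _
    _ ≤ 2 * #C := by linarith [card_image_le (s := C) (f := f)]

lemma card_compl_eq_card_of_isIndep (hf : Involutive f) (hadj : ∀ x, G.Adj x (f x))
    {A : Finset V} (hA : IsIndep G A) (hAc : IsIndep G Aᶜ) : #Aᶜ = #A := by
  have hswap : ∀ {B : Finset V}, IsIndep G B → ∀ x ∈ B, f x ∉ B :=
    fun hB x hx hfx => hB hx hfx (hadj x)
  apply le_antisymm
  · refine card_le_card_of_injOn f (fun x hx => ?_) hf.injective.injOn
    simpa using hswap hAc x hx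
  · exact card_le_card_of_injOn f (fun x hx => mem_compl.2 (hswap hA x hx)) hf.injective.injOn

lemma feasible_of_isIndep_compl {A : Finset V} (hA : IsIndep G A) (hAc : IsIndep G Aᶜ)
    (hne : Aᶜ.Nonempty) {b : ℕ} (hb : #Aᶜ ≤ b) (hcard : #A ≤ 2 * #Aᶜ) : Feasible G b := by
  refine ⟨∅, ∅, A, Aᶜ, Aᶜ, ?_⟩
  simp only [← compl_eq_univ_sdiff, empty_union, disjoint_empty_left, Subset.refl]
  exact ⟨trivial, trivial, trivial, hA, hne, hne, trivial, trivial, hb, hAc, hAc,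
    by omega⟩

theorem classOne_of_isIndep_compl_of_involutive [Nonempty V] {A : Finset V}
    (hA : IsIndep G A) (hAc : IsIndep G Aᶜ) (hf : Involutive f) (hadj : ∀ x, G.Adj x (f x)) :
    ClassOne G := by
  have hcard := card_compl_eq_card_of_isIndep hf hadj hA hAc
  have hsum : #A + #Aᶜ = Fintype.card V := card_add_card_compl A
  have hpos := Fintype.card_pos (α := V)
  refine feasible_of_isIndep_compl hA hAc ?_ (le_coverNumber fun C hC => ?_) (by omega)
  · rw [← card_pos]; omega
  · have := card_le_two_mul_card_of_isCover hf hadj hC; omega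

end Bipartite

namespace hypercubeGraph

variable {n : ℕ}

def parity (x : Fin n → Bool) : ZMod 2 := ∑ i, if x i then 1 else 0

lemma parity_ne_of_adj {x y : Fin n → Bool} (h : (hypercubeGraph n).Adj x y) :
    parity x ≠ parity y := by
  intro he
  -- In `ZMod 2` the difference of parities counts the coordinates where `x` and `y` differ.
  have key : parity y - parity x = (#(univ.filter fun i => x i ≠ y i) : ZMod 2) := by
    rw [parity, parity, ← sum_sub_distrib, card_filter, Nat.cast_sum]
    refine sum_congr rfl fun i _ => ?_
    cases x i <;> cases y i <;> decide
  rw [he, sub_self, h] at key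
  exact zero_ne_one key

lemma isIndep_filter_parity_eq (c : ZMod 2) :
    IsIndep (hypercubeGraph n) (univ.filter fun x => parity x = c) := by
  intro u hu v hv hadj
  rw [mem_filter] at hu hv
  exact parity_ne_of_adj hadj (hu.2.trans hv.2.symm)

lemma compl_filter_parity_eq_zero :
    (univ.filter fun x : Fin n → Bool => parity x = 0)ᶜ =
      univ.filter fun x => parity x = 1 := by
  rw [compl_filter]
  refine filter_congr fun x _ => ?_
  generalize parity x = c
  revert c
  decide

lemma adj_update_not (x : Fin n → Bool) (i : Fin n) :
    (hypercubeGraph n).Adj x (update x i (!x i)) := by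
  change #(univ.filter fun j => x j ≠ update x i (!x i) j) = 1
  convert card_singleton i
  ext j
  rcases eq_or_ne j i with rfl | hj
  · simp
  · simp [hj]

lemma involutive_update_not (i : Fin n) :
    Involutive fun x : Fin n → Bool => update x i (!x i) := by
  intro x
  ext j
  rcases eq_or_ne j i with rfl | hj
  · simp
  · simp [hj]

end hypercubeGraph

open hypercubeGraph in
/-- For every `n ≥ 1`, the `n`-dimensional hypercube is of class one. -/
theorem hypercube_classOne (n : ℕ) (hn : 1 ≤ n) : ClassOne (hypercubeGraph n) := by
  have hAc := isIndep_filter_parity_eq (n := n) 1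
  rw [← compl_filter_parity_eq_zero] at hAc
  exact classOne_of_isIndep_compl_of_involutive (isIndep_filter_parity_eq 0) hAc
    (involutive_update_not ⟨0, hn⟩) (adj_update_not · ⟨0, hn⟩)
end
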